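/- Consider primal SDP min{⟨C,X⟩ : A(X) = b, X ⪰ 0} with optimal value p* attained, and its dual. If there exist optimal X* and dual slack Z* = C − A*(y*) ⪰ 0 with ⟨X*,Z*⟩ = 0 and rank(X*) + rank(Z*) = n (strict complementarity), then the singularity degree of the primal optimal set O_P = {X ⪰ 0 : A(X) = b, ⟨C,X⟩ = p*} is at most 1. -/

import Mathlib

/-!
The dual slack `Z* = C - A*(y*)` is itself an exposing vector of the admissible form with
`τ = 1`, `y = -y*`: complementary slackness `⟨X*, Z*⟩ = 0` shows that the duality gap vanishes,
so `⟨Z*, X⟩ = p* - bᵀy* = 0` on the whole optimal set. Strict complementarity says its rank is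
maximal, `rank X* + rank Z* = n`. If instead `Z* = 0`, then `X*` has full rank and is positive
definite.
-/

open Matrix
open scoped ComplexOrder

theorem Matrix.isUnit_of_rank_eq_card {ι K : Type*} [Fintype ι] [DecidableEq ι] [Field K]
    {A : Matrix ι ι K} (h : A.rank = Fintype.card ι) : IsUnit A := by
  refine mulVec_surjective_iff_isUnit.mp <| (LinearMap.range_eq_top (f := A.mulVecLin)).mp ?_
  exact Submodule.eq_top_of_finrank_eq (by simpa [Matrix.rank] using h)

theorem Matrix.PosSemidef.posDef_of_rank_eq_card {ι 𝕜 : Type*} [Fintype ι] [DecidableEq ι]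
    [RCLike 𝕜] {A : Matrix ι ι 𝕜} (hA : A.PosSemidef) (h : A.rank = Fintype.card ι) :
    A.PosDef :=
  hA.posDef_iff_isUnit.mpr (isUnit_of_rank_eq_card h)

theorem Matrix.trace_sub_sum_smul_mul {ι κ R : Type*} [Fintype ι] [Fintype κ] [CommRing R]
    (C X : Matrix ι ι R) (S : κ → Matrix ι ι R) (y : κ → R) :
    ((C - ∑ k, y k • S k) * X).trace = (C * X).trace - ∑ k, y k * (S k * X).trace := by
  simp only [sub_mul, Finset.sum_mul, trace_sub, trace_sum, smul_mul, trace_smul, smul_eq_mul]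

theorem stmt11 {n m : ℕ} (S : Fin m → Matrix (Fin n) (Fin n) ℝ)
    (b : Fin m → ℝ)
    (C : Matrix (Fin n) (Fin n) ℝ) (pstar : ℝ)
    (OP : Set (Matrix (Fin n) (Fin n) ℝ))
    (hOP : OP = {X | X.PosSemidef ∧ (∀ i, (S i * X).trace = b i) ∧ (C * X).trace = pstar})
    (Xstar : Matrix (Fin n) (Fin n) ℝ) (hXstar : Xstar ∈ OP)
    (ystar : Fin m → ℝ) (Zstar : Matrix (Fin n) (Fin n) ℝ)
    (hZdef : Zstar = C - ∑ i, ystar i • S i) (hZpsd : Zstar.PosSemidef)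
    (hcomp : (Xstar * Zstar).trace = 0)
    (hsc : Xstar.rank + Zstar.rank = n) :
    (∃ X ∈ OP, X.PosDef) ∨
      ∃ (τ : ℝ) (y : Fin m → ℝ),
        (τ • C + ∑ i, y i • S i).PosSemidef ∧
        (τ • C + ∑ i, y i • S i) ≠ 0 ∧
        τ * pstar + (∑ i, b i * y i) = 0 ∧
        (∀ X ∈ OP, ((τ • C + ∑ i, y i • S i) * X).trace = 0) ∧
        ∃ X ∈ OP, X.rank + (τ • C + ∑ i, y i • S i).rank = n := by
  have hgap : ∀ X ∈ OP, (Zstar * X).trace = pstar - ∑ i, b i * ystar i := by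
    rintro X hX
    rw [hOP] at hX
    obtain ⟨-, hfeas, hobj⟩ := hX
    simp only [hZdef, trace_sub_sum_smul_mul, hobj, hfeas, mul_comm]
  have hdual : ∑ i, b i * ystar i = pstar := by
    linarith [hgap Xstar hXstar, trace_mul_comm Xstar Zstar]
  by_cases hZ0 : Zstar = 0
  · refine .inl ⟨Xstar, hXstar, ?_⟩
    have hXpsd : Xstar.PosSemidef := by rw [hOP] at hXstar; exact hXstar.1
    refine hXpsd.posDef_of_rank_eq_card ?_
    simpa [hZ0] using hsc
  · have hZ : (1 : ℝ) • C + ∑ i, (-ystar) i • S i = Zstar := by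
      simp [hZdef, sub_eq_add_neg]
    refine .inr ⟨1, -ystar, ?_⟩
    rw [hZ]
    refine ⟨hZpsd, hZ0, ?_, fun X hX => ?_, Xstar, hXstar, hsc⟩
    · simp only [Pi.neg_apply, mul_neg, Finset.sum_neg_distrib, hdual]
      ring
    · rw [hgap X hX, hdual, sub_self]
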